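/- arXiv:1409.2469 — 2 statements merged into one kernel-verified Lean document; each statement's English description precedes it below -/
import Mathlib

section
/- Let k be a positive integer and let G be a simple graph of order n such that d(x) + d(y) ≥ n − k + 1 for every pair of nonadjacent vertices x, y, and such that every path in G has at most n − k + 1 vertices. Then every connected component of G on at least 3 vertices contains a Hamilton cycle of that component. -/
open SimpleGraph

/-- The degree of a vertex: the cardinality of its neighborhood. -/
noncomputable def deg {V : Type*} (G : SimpleGraph V) (x : V) : ℕ :=
  (G.neighborSet x).ncard

/-- The number of leaves (vertices of degree 1) of a subgraph. -/
noncomputable def leafCount {V : Type*} {G : SimpleGraph V} (H : G.Subgraph) : ℕ :=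
  {v : H.verts | (H.coe.neighborSet v).ncard = 1}.ncard

/-- `H` is a tree with at most `k` leaves (a `k`-ended tree). -/
def IsEndedTree {V : Type*} {G : SimpleGraph V} (H : G.Subgraph) (k : ℕ) : Prop :=
  H.coe.IsTree ∧ leafCount H ≤ k

/-- `t_k`: the maximum order of a subgraph of `G` that is a tree with at most `k` leaves. -/
noncomputable def treeOrd {V : Type*} (G : SimpleGraph V) (k : ℕ) : ℕ :=
  sSup {m | ∃ H : G.Subgraph, IsEndedTree H k ∧ H.verts.ncard = m}

/-- The number of vertices of a longest path in `G`. -/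
noncomputable def pathOrd {V : Type*} (G : SimpleGraph V) : ℕ :=
  sSup {m | ∃ (u v : V) (p : G.Walk u v), p.IsPath ∧ p.support.length = m}

/-- `s` is an independent set of vertices of `G`. -/
def IsIndep {V : Type*} (G : SimpleGraph V) (s : Set V) : Prop :=
  s.Pairwise fun a b => ¬ G.Adj a b

/-- `σ₃`: the minimum degree sum over independent triples of vertices. -/
noncomputable def sigma3 {V : Type*} (G : SimpleGraph V) : ℕ :=
  sInf {s | ∃ x y z : V, x ≠ y ∧ x ≠ z ∧ y ≠ z ∧
    ¬G.Adj x y ∧ ¬G.Adj x z ∧ ¬G.Adj y z ∧ s = deg G x + deg G y + deg G z}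

/-! A longest path `x₀ ⋯ x_m` contains every neighbour of its two ends. If `x₀ ~ x_m` it closes
into a cycle; otherwise `d(x₀) + d(x_m)` is at least the number `m + 1` of vertices on the path, so
by pigeonhole some `i < m` has `x₀ ~ x_{i+1}` and `x_m ~ x_i`, and `x₀ ⋯ x_i x_m ⋯ x_{i+1} x₀` is a
cycle on the same vertices. In a connected graph such a cycle is Hamiltonian: an edge leaving it
would extend the cycle, opened at that edge, to a path longer than the longest one. The theorem
applies this to the graph induced on each component, whose paths and degrees are those of `G`. -/

namespace SimpleGraph

variable {V : Type*} {G : SimpleGraph V}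

theorem deg_le_card_of_forall_adj {α : Type*} {u : V} (f : α → V) {s : Finset α}
    (h : ∀ w, G.Adj u w → ∃ a ∈ s, f a = w) : deg G u ≤ s.card := by
  classical
  calc deg G u ≤ (s.image f : Set V).ncard := Set.ncard_le_ncard fun w hw => by simpa using h w hw
    _ ≤ s.card := by rw [Set.ncard_coe_finset]; exact Finset.card_image_le

namespace Walk

def IsLongestPath {u v : V} (p : G.Walk u v) : Prop :=
  p.IsPath ∧ ∀ ⦃x y : V⦄ (q : G.Walk x y), q.IsPath → q.length ≤ p.length

theorem exists_isLongestPath [Finite V] [Nonempty V] :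
    ∃ (u v : V) (p : G.Walk u v), p.IsLongestPath := by
  have := Fintype.ofFinite V
  obtain ⟨v⟩ := ‹Nonempty V›
  let S : Set ℕ := {n | ∃ (x y : V) (q : G.Walk x y), q.IsPath ∧ q.length = n}
  have hS : BddAbove S := ⟨Fintype.card V, by rintro _ ⟨_, _, q, hq, rfl⟩; exact hq.length_lt.le⟩
  obtain ⟨u, w, p, hp, hlen⟩ := Nat.sSup_mem (s := S) ⟨0, v, v, nil, .nil, rfl⟩ hS
  exact ⟨u, w, p, hp, fun x y q hq => hlen ▸ le_csSup hS ⟨x, y, q, hq, rfl⟩⟩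

theorem IsPath.isCycle_cons {u v : V} {p : G.Walk u v} (hp : p.IsPath) (h : G.Adj v u)
    (hlen : 2 ≤ p.length) : (cons h p).IsCycle :=
  isCycle_iff_isPath_tail_and_le_length.mpr ⟨by simpa using hp, by simpa using hlen⟩

theorem support_take_append_cons_reverse_drop_perm {u v : V} (p : G.Walk u v) {i : ℕ}
    (hi : i < p.length) (h : G.Adj (p.getVert i) v) :
    ((p.take i).append (cons h (p.drop (i + 1)).reverse)).support.Perm p.support := by
  have hmin : (i + 1) ⊓ p.length = i + 1 := min_eq_left hi
  rw [support_append, support_cons, List.tail_cons, support_reverse, support_take,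
    drop_support_eq_support_drop_min, hmin]
  exact ((List.reverse_perm _).append_left _).trans (List.take_append_drop _ _ ▸ List.Perm.refl _)

theorem exists_adj_getVert_succ_adj_getVert {u v : V} (p : G.Walk u v)
    (hu : G.neighborSet u ⊆ {x | x ∈ p.support}) (hv : G.neighborSet v ⊆ {x | x ∈ p.support})
    (hdeg : p.length < deg G u + deg G v) :
    ∃ i < p.length, G.Adj u (p.getVert (i + 1)) ∧ G.Adj v (p.getVert i) := by
  classical
  set S := (Finset.range p.length).filter fun i => G.Adj u (p.getVert (i + 1))
  set T := (Finset.range p.length).filter fun i => G.Adj v (p.getVert i)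
  have hS : deg G u ≤ S.card := by
    refine deg_le_card_of_forall_adj (fun i => p.getVert (i + 1)) fun w hw => ?_
    obtain ⟨j, rfl, hj⟩ := mem_support_iff_exists_getVert.mp (hu hw)
    obtain _ | i := j
    · exact absurd hw (by simp)
    · exact ⟨i, by simpa [S] using ⟨hj, hw⟩, rfl⟩
  have hT : deg G v ≤ T.card := by
    refine deg_le_card_of_forall_adj p.getVert fun w hw => ?_
    obtain ⟨j, rfl, hj⟩ := mem_support_iff_exists_getVert.mp (hv hw)
    have hjv : j ≠ p.length := by rintro rfl; exact absurd hw (by simp)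
    exact ⟨j, by simpa [T] using ⟨by omega, hw⟩, rfl⟩
  obtain ⟨i, hi⟩ : (S ∩ T).Nonempty := by
    have hST : S ∪ T ⊆ Finset.range p.length :=
      Finset.union_subset (Finset.filter_subset _ _) (Finset.filter_subset _ _)
    have := Finset.card_le_card hST
    have := Finset.card_union_add_card_inter S T
    rw [Finset.card_range] at *
    exact Finset.card_pos.mp (by omega)
  simp only [Finset.mem_inter, Finset.mem_filter, Finset.mem_range, S, T] at hi
  exact ⟨i, hi.1.1, hi.1.2, hi.2.2⟩

theorem IsPath.exists_isPath_adj_start_of_length_lt {u v : V} {p : G.Walk u v} (hp : p.IsPath)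
    (hu : G.neighborSet u ⊆ {x | x ∈ p.support}) (hv : G.neighborSet v ⊆ {x | x ∈ p.support})
    (hdeg : p.length < deg G u + deg G v) :
    ∃ (w : V) (q : G.Walk u w), q.IsPath ∧ G.Adj w u ∧ q.length = p.length := by
  obtain ⟨i, hi, hui, hvi⟩ := p.exists_adj_getVert_succ_adj_getVert hu hv hdeg
  have hperm := p.support_take_append_cons_reverse_drop_perm hi hvi.symm
  refine ⟨_, _, isPath_def _ |>.mpr (hperm.nodup_iff.mpr hp.support_nodup), hui.symm, ?_⟩
  simpa only [length_support, Nat.add_right_cancel_iff] using hperm.length_eq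

namespace IsLongestPath

variable {u v : V} {p : G.Walk u v}

theorem reverse (hp : p.IsLongestPath) : p.reverse.IsLongestPath :=
  ⟨hp.1.reverse, fun _ _ q hq => (length_reverse p).symm ▸ hp.2 q hq⟩

theorem mem_support_of_adj_start (hp : p.IsLongestPath) {w : V} (h : G.Adj u w) :
    w ∈ p.support := by
  by_contra hw
  have := hp.2 _ (hp.1.cons hw (h := h.symm))
  simp at this

theorem mem_support_of_adj_end (hp : p.IsLongestPath) {w : V} (h : G.Adj v w) :
    w ∈ p.support := by
  simpa using hp.reverse.mem_support_of_adj_start h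

theorem two_le_length (hp : p.IsLongestPath) (hconn : G.Connected)
    (hcard : 3 ≤ Nat.card V) : 2 ≤ p.length := by
  by_contra! hlen
  have hends : ∀ x ∈ p.support, x = u ∨ x = v := by
    cases p with
    | nil => simp
    | cons h q => cases q with
      | nil => simp
      | cons _ _ => simp at hlen
  obtain ⟨z, hz⟩ : ∃ z, z ∉ p.support := by
    by_contra! h
    have := Nat.card_le_card_of_surjective (fun i : Fin p.support.length => p.support.get i)
      (fun z => List.mem_iff_get.mp (h z))
    simp only [Nat.card_eq_fintype_card, Fintype.card_fin, length_support] at this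
    omega
  obtain ⟨d, -, hd, hdz⟩ := (hconn.preconnected u z).some.exists_boundary_dart
    {x | x ∈ p.support} p.start_mem_support hz
  rcases hends _ hd with h | h
  · exact hdz (hp.mem_support_of_adj_start (h ▸ d.adj))
  · exact hdz (hp.mem_support_of_adj_end (h ▸ d.adj))

theorem mem_support_of_connected (hp : p.IsLongestPath) (hconn : G.Connected) (h : G.Adj v u)
    (hlen : 2 ≤ p.length) (z : V) : z ∈ p.support := by
  classical
  by_contra hz
  obtain ⟨d, -, hd, hdz⟩ := (hconn.preconnected u z).some.exists_boundary_dart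
    {x | x ∈ p.support} p.start_mem_support hz
  have hdC : d.fst ∈ (cons h p).support := List.mem_cons_of_mem _ hd
  have hC := (hp.1.isCycle_cons h hlen).rotate hdC
  have hperm : ((cons h p).rotate d.fst hdC).tail.support.Perm p.support := by
    rw [support_tail_of_not_nil _ hC.not_nil]
    simpa using (support_rotate (cons h p) _ hdC).perm
  have := hp.2 _ (hC.isPath_tail.concat (fun hmem => hdz (hperm.mem_iff.mp hmem)) d.adj)
  have := hperm.length_eq
  simp only [length_support, length_concat] at *
  omega

theorem isHamiltonianCycle_cons [DecidableEq V] (hp : p.IsLongestPath) (hconn : G.Connected)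
    (h : G.Adj v u) (hlen : 2 ≤ p.length) : (cons h p).IsHamiltonianCycle :=
  isHamiltonianCycle_isCycle_and_isHamiltonian_tail.mpr ⟨hp.1.isCycle_cons h hlen, fun a => by
    simpa using hp.1.isHamiltonian_of_mem (hp.mem_support_of_connected hconn h hlen) a⟩

end IsLongestPath

end Walk

theorem Connected.exists_isHamiltonianCycle_of_length_support_le [Finite V] [DecidableEq V]
    (hconn : G.Connected) (hcard : 3 ≤ Nat.card V)
    (hore : ∀ x y, x ≠ y → ¬G.Adj x y →
      ∀ (a b : V) (p : G.Walk a b), p.IsPath → p.support.length ≤ deg G x + deg G y) :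
    ∃ (v : V) (p : G.Walk v v), p.IsHamiltonianCycle := by
  have : Nonempty V := Nat.card_pos_iff.mp (by omega) |>.1
  obtain ⟨u, v, p, hp⟩ := Walk.exists_isLongestPath (G := G)
  suffices ∃ (w : V) (q : G.Walk u w) (h : G.Adj w u), q.IsLongestPath by
    obtain ⟨w, q, h, hq⟩ := this
    exact ⟨w, _, hq.isHamiltonianCycle_cons hconn h (hq.two_le_length hconn hcard)⟩
  by_cases huv : G.Adj v u
  · exact ⟨v, p, huv, hp⟩
  have hne : u ≠ v := by
    rintro rfl
    have := hp.two_le_length hconn hcard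
    rw [Walk.length_eq_zero_iff.mpr (Walk.isPath_iff_nil.mp hp.1)] at this
    omega
  have hlen := hore u v hne (fun h => huv h.symm) u v p hp.1
  rw [Walk.length_support] at hlen
  obtain ⟨w, q, hq, hwu, hqp⟩ := hp.1.exists_isPath_adj_start_of_length_lt
    (fun _ => hp.mem_support_of_adj_start) (fun _ => hp.mem_support_of_adj_end) (by omega)
  exact ⟨w, q, hwu, hq, fun x y r hr => hqp ▸ hp.2 r hr⟩

theorem ConnectedComponent.deg_toSimpleGraph (c : G.ConnectedComponent) (x : c) :
    deg c.toSimpleGraph x = deg G x := by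
  have himg : Subtype.val '' c.toSimpleGraph.neighborSet x = G.neighborSet x := by
    ext w
    refine ⟨fun ⟨_, hw, hx⟩ => hx ▸ hw, fun hw => ?_⟩
    exact ⟨⟨w, c.mem_supp_of_adj_mem_supp x.2 hw⟩, hw, rfl⟩
  rw [deg, deg, ← himg, Set.ncard_image_of_injective _ Subtype.val_injective]

end SimpleGraph

theorem component_hamiltonian_general {V : Type*} [Fintype V] [DecidableEq V] (k : ℕ)
    (G : SimpleGraph V)
    (hdeg : ∀ x y : V, x ≠ y → ¬ G.Adj x y →
      (Fintype.card V : ℤ) - k + 1 ≤ (deg G x : ℤ) + deg G y)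
    (hpath : ∀ (u v : V) (p : G.Walk u v), p.IsPath →
      (p.support.length : ℤ) ≤ (Fintype.card V : ℤ) - k + 1) :
    ∀ c : G.ConnectedComponent, 3 ≤ c.supp.ncard →
      ∃ (v : c.supp) (p : (G.induce c.supp).Walk v v), p.IsHamiltonianCycle := by
  intro c hc
  refine c.connected_toSimpleGraph.exists_isHamiltonianCycle_of_length_support_le hc ?_
  intro x y hxy hxy' a b p hp
  have hlen := hpath _ _ _ (hp.map (f := c.toSimpleGraph_hom) Subtype.val_injective)
  have hsum := hdeg x y (Subtype.coe_ne_coe.mpr hxy) hxy'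
  rw [Walk.support_map, List.length_map] at hlen
  rw [c.deg_toSimpleGraph, c.deg_toSimpleGraph]
  omega

/-- If `k ≥ 1`, `d(x) + d(y) ≥ n - k + 1` for every pair of nonadjacent
vertices, and every path of `G` has at most `n - k + 1` vertices, then every connected
component of `G` on at least 3 vertices has a Hamilton cycle. -/
theorem component_hamiltonian {V : Type*} [Fintype V] [DecidableEq V] (k : ℕ) (hk : 1 ≤ k)
    (G : SimpleGraph V)
    (hdeg : ∀ x y : V, x ≠ y → ¬ G.Adj x y →
      (Fintype.card V : ℤ) - k + 1 ≤ (deg G x : ℤ) + deg G y)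
    (hpath : ∀ (u v : V) (p : G.Walk u v), p.IsPath →
      (p.support.length : ℤ) ≤ (Fintype.card V : ℤ) - k + 1) :
    ∀ c : G.ConnectedComponent, 3 ≤ c.supp.ncard →
      ∃ (v : c.supp) (p : (G.induce c.supp).Walk v v), p.IsHamiltonianCycle :=
  component_hamiltonian_general k G hdeg hpath
end

section
/- Let δ ≥ 1 and k ≥ 2 be integers, and let G be the join of the complete graph K_δ with the empty graph on δ + k vertices. Then every subgraph of G that is a tree with at most k leaves has at most 2δ + k − 1 vertices, i.e., t_k(G) ≤ 2δ + k − 1. -/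
open SimpleGraph

/-! Let `A` be the vertices of the tree `T` lying in `K_δ`. Since the other side is independent in
`G`, `A` is a vertex cover of `T`, so the degrees in `T` of the remaining vertices `B` sum to at
most the `n - 1` edges of `T`. Each vertex of `B` has degree at least `2` unless it is a leaf,
whence `2 |B| ≤ n - 1 + k`; together with `|A| ≤ δ` this gives `n ≤ 2δ + k - 1`. -/

open Finset

theorem Finset.card_le_card_of_forall_isLeft {W α β : Type*} [Fintype α] {f : W → α ⊕ β}
    (hf : Function.Injective f) {s : Finset W} (hs : ∀ w ∈ s, (f w).isLeft) :
    #s ≤ Fintype.card α :=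
  calc #s ≤ #(univ.map .inl : Finset (α ⊕ β)) :=
        card_le_card_of_injOn f (fun w hw => by
          obtain ⟨a, ha⟩ := Sum.isLeft_iff.1 (hs w hw)
          simp [ha]) hf.injOn
    _ = Fintype.card α := by simp

theorem Finset.two_mul_card_le_sum_add_card_filter_eq_one {ι : Type*} (s : Finset ι) (f : ι → ℕ)
    (hf : ∀ i ∈ s, 0 < f i) : 2 * #s ≤ ∑ i ∈ s, f i + #{i ∈ s | f i = 1} := by
  rw [card_filter, ← sum_add_distrib, card_eq_sum_ones, mul_sum]
  refine sum_le_sum fun i hi => ?_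
  have := hf i hi
  split_ifs <;> omega

namespace SimpleGraph

variable {W : Type*} [Fintype W] [DecidableEq W] {T : SimpleGraph W} [DecidableRel T.Adj]

theorem IsVertexCover.card_edgeFinset_le_sum_degree {S : Finset W} (hS : T.IsVertexCover S) :
    #T.edgeFinset ≤ ∑ v ∈ S, T.degree v :=
  calc #T.edgeFinset ≤ #(S.biUnion fun v => T.incidenceFinset v) := card_le_card fun e he => by
        induction e using Sym2.ind with
        | _ x y =>
          have hxy : T.Adj x y := by simpa using he
          simp only [mem_biUnion, mem_incidenceFinset]
          rcases hS hxy with hx | hy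
          · exact ⟨x, hx, T.mk'_mem_incidenceSet_left_iff.2 hxy⟩
          · exact ⟨y, hy, T.mk'_mem_incidenceSet_right_iff.2 hxy⟩
    _ ≤ ∑ v ∈ S, #(T.incidenceFinset v) := card_biUnion_le
    _ = ∑ v ∈ S, T.degree v := by simp only [card_incidenceFinset_eq_degree]

theorem IsTree.card_lt_two_mul_card_add_card_degree_eq_one [Nontrivial W] (hT : T.IsTree)
    {S : Finset W} (hS : T.IsVertexCover S) :
    Fintype.card W < 2 * #S + #{v | T.degree v = 1} := by
  have hedges := hT.card_edgeFinset
  have hsplit : ∑ v ∈ S, T.degree v + ∑ v ∈ Sᶜ, T.degree v = 2 * #T.edgeFinset := by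
    rw [sum_add_sum_compl, sum_degrees_eq_twice_card_edges]
  have hcover := hS.card_edgeFinset_le_sum_degree
  have hcompl := Sᶜ.two_mul_card_le_sum_add_card_filter_eq_one (T.degree ·)
    fun v _ => hT.connected.preconnected.degree_pos_of_nontrivial v
  have hleaves : #{v ∈ Sᶜ | T.degree v = 1} ≤ #{v | T.degree v = 1} :=
    card_le_card (filter_subset_filter _ (subset_univ _))
  have hcard := card_add_card_compl S
  omega

end SimpleGraph

theorem leafCount_eq_card_filter_degree_eq_one {V : Type*} {G : SimpleGraph V} (H : G.Subgraph)
    [Fintype H.verts] [DecidableRel H.coe.Adj] :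
    leafCount H = #{v | H.coe.degree v = 1} := by
  rw [leafCount, Set.ncard_eq_toFinset_card']
  congr 1
  ext v
  simp only [Set.mem_toFinset, Set.mem_ofPred_eq, mem_filter, mem_univ, true_and]
  rw [Set.ncard_eq_toFinset_card', ← card_neighborFinset_eq_degree]
  rfl

theorem join_example_treeOrd_bound_general (δ k : ℕ) (hk : 2 ≤ k)
    (G : SimpleGraph (Fin δ ⊕ Fin (δ + k)))
    (hG : ∀ u v, G.Adj u v ↔ u ≠ v ∧ (u.isLeft = true ∨ v.isLeft = true)) :
    ∀ H : G.Subgraph, IsEndedTree H k → H.verts.ncard ≤ 2 * δ + k - 1 := by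
  rintro H ⟨htree, hleaf⟩
  have : Fintype H.verts := Fintype.ofFinite _
  have := Classical.decRel H.coe.Adj
  rw [Set.ncard_eq_toFinset_card', Set.toFinset_card]
  cases subsingleton_or_nontrivial H.verts with
  | inl => have := Fintype.card_le_one_iff_subsingleton.2 ‹_›; omega
  | inr =>
    let S : Finset H.verts := {v | (v : Fin δ ⊕ Fin (δ + k)).isLeft}
    have hcover : H.coe.IsVertexCover S := fun x y hxy => by
      simpa [S] using ((hG _ _).1 (H.adj_sub hxy)).2
    have hleft : #S ≤ δ := by
      simpa using card_le_card_of_forall_isLeft Subtype.val_injective (s := S) (by simp [S])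
    have hbound := htree.card_lt_two_mul_card_add_card_degree_eq_one hcover
    rw [leafCount_eq_card_filter_degree_eq_one] at hleaf
    omega

/-- Let `G = (δ+k)K₁ + K_δ`, `δ ≥ 1`, `k ≥ 2`. Then every subgraph of
`G` that is a tree with at most `k` leaves has at most `2δ + k - 1` vertices. -/
theorem join_example_treeOrd_bound (δ k : ℕ) (hδ : 1 ≤ δ) (hk : 2 ≤ k)
    (G : SimpleGraph (Fin δ ⊕ Fin (δ + k)))
    (hG : ∀ u v, G.Adj u v ↔ u ≠ v ∧ (u.isLeft = true ∨ v.isLeft = true)) :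
    ∀ H : G.Subgraph, IsEndedTree H k → H.verts.ncard ≤ 2 * δ + k - 1 :=
  join_example_treeOrd_bound_general δ k hk G hG
end
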